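/- If G₁ and G₂ are term graphs over the λ-signature with scope delimiters, both carry correct abstraction-prefix functions P₁ and P₂, and h : G₁ → G₂ is a homomorphism of the underlying term graphs, then h automatically respects the abstraction prefixes: the homomorphic extension of h maps P₁(w) to P₂(h w) for every vertex w. Consequently, the class of λ-term-graphs admitting a correct abstraction-prefix function is such that homomorphic images of prefixes are determined. -/

import Mathlib

/-- A (root-connected) term graph over signature `Sig` with arity function `ar`,
    with vertex type `V`. -/
structure TermGraph (Sig : Type) (ar : Sig → ℕ) (V : Type) where
  lab : V → Sig
  args : V → List V
  root : V
  arity_ok : ∀ v, (args v).length = ar (lab v)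
  rooted : ∀ v, Relation.ReflTransGen (fun a b => b ∈ args a) root v

/-- `R` is a bisimulation between term graphs `G₁` and `G₂`. -/
def IsBisim {Sig : Type} {ar : Sig → ℕ} {V₁ V₂ : Type}
    (G₁ : TermGraph Sig ar V₁) (G₂ : TermGraph Sig ar V₂)
    (R : V₁ → V₂ → Prop) : Prop :=
  R G₁.root G₂.root ∧
  (∀ v w, R v w → G₁.lab v = G₂.lab w) ∧
  (∀ v w, R v w → List.Forall₂ R (G₁.args v) (G₂.args w))

/-- `G₁` and `G₂` are bisimilar. -/
def Bisim {Sig : Type} {ar : Sig → ℕ} {V₁ V₂ : Type}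
    (G₁ : TermGraph Sig ar V₁) (G₂ : TermGraph Sig ar V₂) : Prop :=
  ∃ R, IsBisim G₁ G₂ R

/-- `h` is a homomorphism of term graphs: it maps root to root, preserves labels,
    and commutes with the argument function. -/
def IsHom {Sig : Type} {ar : Sig → ℕ} {V₁ V₂ : Type}
    (G₁ : TermGraph Sig ar V₁) (G₂ : TermGraph Sig ar V₂) (h : V₁ → V₂) : Prop :=
  h G₁.root = G₂.root ∧
  (∀ v, G₂.lab (h v) = G₁.lab v) ∧
  (∀ v, G₂.args (h v) = (G₁.args v).map h)

/-- There exists a functional bisimulation (homomorphism) from `G₁` to `G₂`. -/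
def FunBisim {Sig : Type} {ar : Sig → ℕ} {V₁ V₂ : Type}
    (G₁ : TermGraph Sig ar V₁) (G₂ : TermGraph Sig ar V₂) : Prop :=
  ∃ h, IsHom G₁ G₂ h

/-- The signature for first-order lambda term graphs with scope delimiters:
    application, abstraction, variable occurrence, scope delimiter, black hole. -/
inductive LamSig : Type
  | app | lam | var | del | bh
deriving DecidableEq

/-- Arities for the lambda signature with scope delimiters. -/
def arL : LamSig → ℕ
  | .app => 2
  | .lam => 1
  | .var => 1
  | .del => 2
  | .bh  => 0

/-- A correct abstraction-prefix function for a term graph over the lambda signature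
    with scope delimiters. -/
structure CorrectPrefix {V : Type} (G : TermGraph LamSig arL V)
    (P : V → List V) : Prop where
  root : P G.root = []
  blackhole : ∀ v, G.lab v = LamSig.bh → P v = []
  lamCond : ∀ w v, G.lab w = LamSig.lam → (G.args w)[0]? = some v →
    P v = P w ++ [w]
  appCond : ∀ w v (k : ℕ), G.lab w = LamSig.app → (G.args w)[k]? = some v →
    P v = P w
  varCond : ∀ w v, G.lab w = LamSig.var → (G.args w)[0]? = some v →
    G.lab v = LamSig.lam ∧ P v ++ [v] = P w
  delCond0 : ∀ w v, G.lab w = LamSig.del → (G.args w)[0]? = some v →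
    ∃ u, P v ++ [u] = P w
  delCond1 : ∀ w v, G.lab w = LamSig.del → (G.args w)[1]? = some v →
    G.lab v = LamSig.lam ∧ P v ++ [v] = P w

/-! The prefix of an argument of a vertex `v` is a function of the label of `v`, of `v` itself and
of the prefix of `v` (`argPrefix`), and this function commutes with renaming vertices letter-wise.
Every vertex is reachable from the root, whose prefix is empty in both graphs, so induction along a
path from the root carries the prefixes through `h`. -/

-- Black holes have no arguments, so the `.bh` clause is arbitrary.
def argPrefix {V : Type} : LamSig → V → List V → List V
  | .lam, v, p => p ++ [v]
  | .var, _, p | .del, _, p => p.dropLast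
  | .app, _, p | .bh, _, p => p

theorem map_argPrefix {V₁ V₂ : Type} (h : V₁ → V₂) (s : LamSig) (v : V₁) (p : List V₁) :
    (argPrefix s v p).map h = argPrefix s (h v) (p.map h) := by
  cases s <;> simp [argPrefix, List.map_dropLast]

theorem CorrectPrefix.prefix_arg {V : Type} {G : TermGraph LamSig arL V} {P : V → List V}
    (hP : CorrectPrefix G P) {v c : V} {k : ℕ} (hk : (G.args v)[k]? = some c) :
    P c = argPrefix (G.lab v) v (P v) := by
  have hk_lt : k < arL (G.lab v) := G.arity_ok v ▸ (List.getElem?_eq_some_iff.1 hk).1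
  cases hl : G.lab v <;> simp only [hl, arL] at hk_lt
  case app => exact hP.appCond v c k hl hk
  case lam =>
    obtain rfl : k = 0 := by omega
    exact hP.lamCond v c hl hk
  case var =>
    obtain rfl : k = 0 := by omega
    simp [argPrefix, ← (hP.varCond v c hl hk).2]
  case del =>
    obtain rfl | rfl : k = 0 ∨ k = 1 := by omega
    · obtain ⟨u, hu⟩ := hP.delCond0 v c hl hk
      simp [argPrefix, ← hu]
    · simp [argPrefix, ← (hP.delCond1 v c hl hk).2]
  case bh => omega

theorem IsHom.getElem?_args {Sig : Type} {ar : Sig → ℕ} {V₁ V₂ : Type}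
    {G₁ : TermGraph Sig ar V₁} {G₂ : TermGraph Sig ar V₂} {h : V₁ → V₂} (hh : IsHom G₁ G₂ h)
    {v c : V₁} {k : ℕ} (hk : (G₁.args v)[k]? = some c) : (G₂.args (h v))[k]? = some (h c) := by
  simp [hh.2.2 v, hk]

/-- A homomorphism between the underlying term graphs of two lambda term graphs
    (term graphs over the lambda signature with scope delimiters, carrying correct
    abstraction-prefix functions) automatically respects the abstraction prefixes:
    the letter-wise extension of the homomorphism maps the prefix of a vertex to the
    prefix of its image. -/
theorem hom_respects_prefixes {V₁ V₂ : Type}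
    (G₁ : TermGraph LamSig arL V₁) (G₂ : TermGraph LamSig arL V₂)
    (P₁ : V₁ → List V₁) (P₂ : V₂ → List V₂)
    (hP₁ : CorrectPrefix G₁ P₁) (hP₂ : CorrectPrefix G₂ P₂)
    (h : V₁ → V₂) (hh : IsHom G₁ G₂ h) :
    ∀ w, (P₁ w).map h = P₂ (h w) := by
  intro w
  induction G₁.rooted w with
  | refl => simp [hP₁.root, hh.1, hP₂.root]
  | tail _ hc ih =>
    obtain ⟨k, hk, rfl⟩ := List.getElem_of_mem hc
    have hk₁ := List.getElem?_eq_getElem hk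
    rw [hP₁.prefix_arg hk₁, hP₂.prefix_arg (hh.getElem?_args hk₁), hh.2.1, map_argPrefix, ih]
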